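/- arXiv:1407.7740 — 3 statements merged into one kernel-verified Lean document; each statement's English description precedes it below -/
import Mathlib

section
/- Let p be a mixed strategy Nash equilibrium up to η (every action in the support of p_i is an η-best response against p_{-i}) of a γ-aggregative game. Then every action x_i in the support of p_i is an (η+γ)-aggregative best response to the expected aggregator S(p). -/
/-- Let `p` be an η-approximate mixed Nash equilibrium of a γ-aggregative game,
in the sense that every action in the support of `p i` is an η-best response
against `p₋ᵢ`.  Then every action in the support of `p i` is an
(η+γ)-aggregative best response to the expected aggregator `S p`.  Here `S`
is the (expected) aggregator on mixed profiles, with bounded influence γ: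
replacing any one player's mixed strategy (in particular by a pure action)
changes `S` by at most γ in ℓ∞; utilities are 1-Lipschitz in the aggregator. -/
theorem mixed_support_aggregative_best_response
    {I A K : Type*} [DecidableEq I]
    (S : (I → PMF A) → K → ℝ) (u : I → A → (K → ℝ) → ℝ) (γ η : ℝ)
    (hinfl : ∀ (j : I) (q : PMF A) (y : I → PMF A) (k : K),
      |S (Function.update y j q) k - S y k| ≤ γ)
    (hlip : ∀ (j : I) (a : A) (s s' : K → ℝ) (c : ℝ),
      (∀ k, |s k - s' k| ≤ c) → |u j a s - u j a s'| ≤ c)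
    (p : I → PMF A) (i : I)
    (hbr : ∀ x ∈ (p i).support, ∀ a : A,
      u i x (S p) ≥ u i a (S (Function.update p i (PMF.pure a))) - η) :
    ∀ x ∈ (p i).support, ∀ a : A, u i x (S p) ≥ u i a (S p) - (η + γ) := by
  intro x hx a
  have hdeviation : |u i a (S (Function.update p i (PMF.pure a))) - u i a (S p)| ≤ γ :=
    hlip i a _ _ γ (hinfl i (PMF.pure a) p)
  linarith [hbr x hx a, (abs_le.mp hdeviation).1]
end

section
/- Suppose p is a mixed strategy profile in which every action in each player's support is an η-aggregative best response to S(p). Let x be a pure profile sampled from p. If ||S(x) - S(p)||_∞ ≤ E, then x is an (η + 2E + γ)-approximate pure strategy Nash equilibrium. -/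
/-!
Concentration moves the aggregator by at most `E`, so by the Lipschitz property each sampled
action stays an `(η + 2E)`-best response to the realised aggregate `S x`. A unilateral deviation
moves the aggregate by at most `γ`, hence changes the deviator's payoff by at most `γ`, which
gives the Nash gap `η + 2E + γ`.
-/

section AggregativeGame

variable {I A K : Type*}

def IsAggBestResponse (v : A → (K → ℝ) → ℝ) (b : A) (s : K → ℝ) (η : ℝ) : Prop :=
  ∀ a, v a s - η ≤ v b s

def IsApproxPureNash [DecidableEq I] (S : (I → A) → K → ℝ) (u : I → A → (K → ℝ) → ℝ)
    (x : I → A) (ε : ℝ) : Prop :=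
  ∀ i a, u i a (S (Function.update x i a)) - ε ≤ u i (x i) (S x)

theorem IsAggBestResponse.of_abs_sub_le {v : A → (K → ℝ) → ℝ}
    (hlip : ∀ a (s s' : K → ℝ) c, (∀ k, |s k - s' k| ≤ c) → |v a s - v a s'| ≤ c)
    {b : A} {s s' : K → ℝ} {η α : ℝ} (hb : IsAggBestResponse v b s η)
    (hss' : ∀ k, |s k - s' k| ≤ α) :
    IsAggBestResponse v b s' (η + 2 * α) := by
  intro a
  have hb' := abs_le.mp (hlip b s s' α hss')
  have ha' := abs_le.mp (hlip a s s' α hss')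
  linarith [hb a]

theorem isApproxPureNash_of_isAggBestResponse [DecidableEq I] {S : (I → A) → K → ℝ}
    {u : I → A → (K → ℝ) → ℝ} {γ ξ : ℝ}
    (hinfl : ∀ j a y k, |S (Function.update y j a) k - S y k| ≤ γ)
    (hlip : ∀ j a (s s' : K → ℝ) c, (∀ k, |s k - s' k| ≤ c) → |u j a s - u j a s'| ≤ c)
    {x : I → A} (hx : ∀ i, IsAggBestResponse (u i) (x i) (S x) ξ) :
    IsApproxPureNash S u x (ξ + γ) := by
  intro i a
  have hdev := abs_le.mp (hlip i a _ _ γ (hinfl i a x))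
  linarith [hx i a]

end AggregativeGame

/-- Suppose in the mixed profile `p` every action in each player's support is
an η-aggregative best response to the expected aggregator `sp = S(p)`; let `x`
be a pure profile sampled from `p` (so each `x i` lies in the support of
`p i`), and suppose `‖S(x) - sp‖∞ ≤ E`.  Then `x` is an
(η + 2E + γ)-approximate pure strategy Nash equilibrium. -/
theorem sampled_profile_is_approx_nash
    {I A K : Type*} [DecidableEq I]
    (S : (I → A) → K → ℝ) (u : I → A → (K → ℝ) → ℝ) (γ η E : ℝ)
    (hinfl : ∀ (j : I) (a : A) (y : I → A) (k : K),
      |S (Function.update y j a) k - S y k| ≤ γ)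
    (hlip : ∀ (j : I) (a : A) (s s' : K → ℝ) (c : ℝ),
      (∀ k, |s k - s' k| ≤ c) → |u j a s - u j a s'| ≤ c)
    (sp : K → ℝ) (x : I → A)
    (habr : ∀ (i : I) (a : A), u i (x i) sp ≥ u i a sp - η)
    (hconc : ∀ k, |S x k - sp k| ≤ E) :
    ∀ (i : I) (a : A),
      u i (x i) (S x) ≥ u i a (S (Function.update x i a)) - (η + 2 * E + γ) := by
  have hconc' : ∀ k, |sp k - S x k| ≤ E := fun k => abs_sub_comm (S x k) (sp k) ▸ hconc k
  have hbr : ∀ i, IsAggBestResponse (u i) (x i) (S x) (η + 2 * E) := fun i =>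
    IsAggBestResponse.of_abs_sub_le (hlip i) (habr i) hconc'
  exact isApproxPureNash_of_isAggBestResponse hinfl hlip hbr
end

section
/- Suppose the linear feasibility program with cross-agent constraints γ⟨f^k, p⟩ ≤ b_k (k ∈ [d]) and private constraints p_i ∈ R_i has a feasible solution, and suppose a sequence of chosen constraints (f^t, b^t), t = 1,…,T, satisfies: (i) the joint regret bound (1/T)Σ_t (γ⟨f^t,p^t⟩ - b^t) ≤ α/2, and (ii) Σ_t(γ⟨f^t,p^t⟩ - b^t) ≥ max_{(f,b)} Σ_t (γ⟨f,p^t⟩ - b) - T·(α/2). Then the average solution p̄ = (1/T)Σ_t p^t satisfies max_k (γ⟨f^k, p̄⟩ - b_k) ≤ α, i.e., p̄ violates every cross-agent constraint by at most α. -/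
open Finset

/-- If the linear feasibility program with cross-agent constraints
`γ⟨fᵏ,p⟩ ≤ bᵏ` and private constraints `pᵢ ∈ Rᵢ` has a feasible solution, the
chosen constraints satisfy the joint regret bound
`(1/T) ∑ₜ (γ⟨fᵗ,pᵗ⟩ - bᵗ) ≤ α/2`, and at every round the chosen constraint is
α/2-approximately the most violated one (in aggregate:
`∑ₜ(γ⟨fᵗ,pᵗ⟩ - bᵗ) ≥ max_k ∑ₜ(γ⟨fᵏ,pᵗ⟩ - bᵏ) - T·α/2`), then the average
solution `p̄ = (1/T)∑ₜ pᵗ` violates every cross-agent constraint by at most α. -/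
theorem distributed_mw_accuracy
    {I J K : Type*} [Fintype I] [Fintype J] [Fintype K]
    (T : ℕ) (hT : 0 < T)
    (fc : K → I → J → ℝ) (bc : K → ℝ)
    (R : I → Set (J → ℝ))
    (p : Fin T → I → J → ℝ) (ft : Fin T → I → J → ℝ) (bt : Fin T → ℝ)
    (γ α : ℝ) (hγ : 0 < γ)
    (hfc : ∀ (k : K) (i : I) (j : J), |fc k i j| ≤ 1)
    (hfeas : ∃ q : I → J → ℝ, (∀ i, q i ∈ R i) ∧
      ∀ k : K, γ * ∑ i : I, ∑ j : J, fc k i j * q i j ≤ bc k)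
    (hp : ∀ (t : Fin T) (i : I), p t i ∈ R i)
    (hregret : (1 / (T : ℝ)) * ∑ t : Fin T,
        (γ * ∑ i : I, ∑ j : J, ft t i j * p t i j - bt t) ≤ α / 2)
    (hexp : ∀ k : K,
      ∑ t : Fin T, (γ * ∑ i : I, ∑ j : J, fc k i j * p t i j - bc k) ≤
        ∑ t : Fin T, (γ * ∑ i : I, ∑ j : J, ft t i j * p t i j - bt t) +
          (T : ℝ) * (α / 2)) :
    ∀ k : K,
      γ * ∑ i : I, ∑ j : J, fc k i j * ((1 / (T : ℝ)) * ∑ t : Fin T, p t i j)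
        - bc k ≤ α := by
  intro k
  have hT' : (0:ℝ) < T := by exact_mod_cast hT
  have key : γ * ∑ i : I, ∑ j : J, fc k i j * ((1 / (T : ℝ)) * ∑ t : Fin T, p t i j)
      - bc k
      = (1 / (T : ℝ)) * ∑ t : Fin T,
          (γ * ∑ i : I, ∑ j : J, fc k i j * p t i j - bc k) := by
    have hswap : ∑ i : I, ∑ j : J, ∑ t : Fin T, fc k i j * p t i j
        = ∑ t : Fin T, ∑ i : I, ∑ j : J, fc k i j * p t i j := by
      calc ∑ i : I, ∑ j : J, ∑ t : Fin T, fc k i j * p t i j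
          = ∑ i : I, ∑ t : Fin T, ∑ j : J, fc k i j * p t i j :=
            Finset.sum_congr rfl fun i _ => Finset.sum_comm
        _ = ∑ t : Fin T, ∑ i : I, ∑ j : J, fc k i j * p t i j := Finset.sum_comm
    have lhs : ∑ i : I, ∑ j : J, fc k i j * ((1 / (T : ℝ)) * ∑ t : Fin T, p t i j)
        = (1 / (T : ℝ)) * ∑ t : Fin T, ∑ i : I, ∑ j : J, fc k i j * p t i j := by
      simp_rw [Finset.mul_sum, mul_left_comm _ ((1:ℝ) / (T:ℝ)), ← Finset.mul_sum]
      congr 1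
      simp_rw [Finset.mul_sum]
      exact hswap
    rw [lhs, Finset.sum_sub_distrib, Finset.sum_const, Finset.card_univ,
      Fintype.card_fin, nsmul_eq_mul, ← Finset.mul_sum]
    field_simp
  rw [key]
  have h2 := hexp k
  calc (1 / (T : ℝ)) * ∑ t : Fin T, (γ * ∑ i : I, ∑ j : J, fc k i j * p t i j - bc k)
      ≤ (1 / (T : ℝ)) * (∑ t : Fin T,
          (γ * ∑ i : I, ∑ j : J, ft t i j * p t i j - bt t) + (T : ℝ) * (α / 2)) := by
        apply mul_le_mul_of_nonneg_left h2 (by positivity)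
    _ = (1 / (T : ℝ)) * ∑ t : Fin T,
          (γ * ∑ i : I, ∑ j : J, ft t i j * p t i j - bt t) + α / 2 := by
        field_simp
    _ ≤ α / 2 + α / 2 := by linarith
    _ = α := by ring
end
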